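/- Let f ∈ H²([-1,1]) with f(±1) = 0 and f'(±1) = 0. Then for every x ∈ [-1,1], ∫_{-1}^{1} G_{ττ}(x,τ) f''(τ) dτ = f(x), where G is the clamped Green function of d⁴/dx⁴ on (-1,1). -/

import Mathlib

/-!
For fixed `x`, `G(x, ·)` is a cubic on each side of `x`, so `G_ττ(x, ·)` is affine on `[-1, x]`
and on `[x, 1]`. Integrating by parts twice on each piece turns `∫ (p + qτ) f''` into boundary
terms. Those at `±1` vanish by the clamped boundary conditions; at `τ = x` the `f'(x)` terms cancel
because `G_ττ` is continuous there, and the `f(x)` terms add up to the jump of `G_τττ` across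
`τ = x`, which is `1`.
-/

/-- The clamped Green function of `d⁴/dx⁴` on `(-1,1)`. -/
noncomputable def GreenG (x τ : ℝ) : ℝ :=
  if τ ≤ x then (1 / 24) * (x - 1) ^ 2 * (τ + 1) ^ 2 * (1 + 2 * x - 2 * τ - x * τ)
  else (1 / 24) * (τ - 1) ^ 2 * (x + 1) ^ 2 * (1 + 2 * τ - 2 * x - x * τ)

open MeasureTheory

open Set Topology intervalIntegral
open scoped Interval

theorem IntervalIntegrable.of_sq {μ : Measure ℝ} [IsLocallyFiniteMeasure μ] {f : ℝ → ℝ} {a b : ℝ}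
    (hf : AEStronglyMeasurable f μ) (hsq : IntervalIntegrable (fun x => f x ^ 2) μ a b) :
    IntervalIntegrable f μ a b := by
  rw [intervalIntegrable_iff] at hsq ⊢
  have : IsFiniteMeasure (μ.restrict (Ι a b)) := isFiniteMeasure_restrict.2 measure_Ioc_lt_top.ne
  exact ((memLp_two_iff_integrable_sq hf.restrict).2 hsq).integrable one_le_two

theorem deriv_deriv_cubic (c₀ c₁ c₂ c₃ τ : ℝ) :
    deriv (deriv fun t : ℝ => c₀ + c₁ * t + c₂ * t ^ 2 + c₃ * t ^ 3) τ = 2 * c₂ + 6 * c₃ * τ := by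
  have h : deriv (fun t : ℝ => c₀ + c₁ * t + c₂ * t ^ 2 + c₃ * t ^ 3) =
      fun t => c₁ + 2 * c₂ * t + 3 * c₃ * t ^ 2 := by
    ext t
    simp (disch := fun_prop)
    ring
  rw [h]
  simp (disch := fun_prop)
  ring

section Affine

variable {f f' f'' φ : ℝ → ℝ} {a b c p q : ℝ}

theorem integral_affine_mul_deriv_deriv (hf : ∀ x ∈ [[a, b]], HasDerivAt f (f' x) x)
    (hf' : ∀ x ∈ [[a, b]], HasDerivAt f' (f'' x) x) (hf'' : IntervalIntegrable f'' volume a b) :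
    ∫ τ in a..b, (p + q * τ) * f'' τ =
      (p + q * b) * f' b - (p + q * a) * f' a - q * (f b - f a) := by
  have hu : ∀ τ ∈ [[a, b]], HasDerivAt (fun τ => p + q * τ) q τ := fun τ _ => by
    simpa using ((hasDerivAt_id τ).const_mul q).const_add p
  have hf'c : ContinuousOn f' [[a, b]] := fun τ hτ =>
    (hf' τ hτ).continuousAt.continuousWithinAt
  rw [integral_mul_deriv_eq_deriv_mul hu hf' intervalIntegrable_const hf'',
    intervalIntegral.integral_const_mul, integral_eq_sub_of_hasDerivAt hf hf'c.intervalIntegrable]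

theorem integral_mul_deriv_deriv_of_eqOn_affine (hab : a ≤ b)
    (hφ : EqOn φ (fun τ => p + q * τ) (Ioo a b))
    (hf : ∀ x ∈ [[a, b]], HasDerivAt f (f' x) x)
    (hf' : ∀ x ∈ [[a, b]], HasDerivAt f' (f'' x) x) (hf'' : IntervalIntegrable f'' volume a b) :
    IntervalIntegrable (fun τ => φ τ * f'' τ) volume a b ∧
      ∫ τ in a..b, φ τ * f'' τ = (p + q * b) * f' b - (p + q * a) * f' a - q * (f b - f a) := by
  have h : EqOn (fun τ => (p + q * τ) * f'' τ) (fun τ => φ τ * f'' τ) (Ioo a b) :=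
    fun τ hτ => congrArg (· * f'' τ) (hφ hτ).symm
  refine ⟨(hf''.continuousOn_mul (by fun_prop)).congr_uIoo (uIoo_of_le hab ▸ h), ?_⟩
  rw [← integral_congr_Ioo_of_le hab h, integral_affine_mul_deriv_deriv hf hf' hf'']

theorem integral_mul_deriv_deriv_of_piecewise_affine {p₁ q₁ p₂ q₂ : ℝ} (hac : a ≤ c) (hcb : c ≤ b)
    (h₁ : EqOn φ (fun τ => p₁ + q₁ * τ) (Ioo a c)) (h₂ : EqOn φ (fun τ => p₂ + q₂ * τ) (Ioo c b))
    (hf : ∀ x ∈ [[a, b]], HasDerivAt f (f' x) x)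
    (hf' : ∀ x ∈ [[a, b]], HasDerivAt f' (f'' x) x) (hf'' : IntervalIntegrable f'' volume a b) :
    ∫ τ in a..b, φ τ * f'' τ =
      ((p₁ + q₁ * c) * f' c - (p₁ + q₁ * a) * f' a - q₁ * (f c - f a)) +
        ((p₂ + q₂ * b) * f' b - (p₂ + q₂ * c) * f' c - q₂ * (f b - f c)) := by
  have hc : c ∈ [[a, b]] := mem_uIcc_of_le hac hcb
  have hac' : [[a, c]] ⊆ [[a, b]] := uIcc_subset_uIcc left_mem_uIcc hc
  have hcb' : [[c, b]] ⊆ [[a, b]] := uIcc_subset_uIcc hc right_mem_uIcc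
  obtain ⟨hI₁, hJ₁⟩ := integral_mul_deriv_deriv_of_eqOn_affine hac h₁
    (fun x hx => hf x (hac' hx)) (fun x hx => hf' x (hac' hx)) (hf''.mono_set hac')
  obtain ⟨hI₂, hJ₂⟩ := integral_mul_deriv_deriv_of_eqOn_affine hcb h₂
    (fun x hx => hf x (hcb' hx)) (fun x hx => hf' x (hcb' hx)) (hf''.mono_set hcb')
  rw [← integral_add_adjacent_intervals hI₁ hI₂, hJ₁, hJ₂]

end Affine

theorem greenG_deriv_deriv_eqOn_Iio (x : ℝ) :
    EqOn (deriv (deriv fun t => GreenG x t))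
      (fun τ => -(x - 1) ^ 2 / 4 + -(x - 1) ^ 2 * (2 + x) / 4 * τ) (Iio x) := by
  intro τ hτ
  have hcubic : (fun t => GreenG x t) =ᶠ[𝓝 τ] fun t =>
      (x - 1) ^ 2 * (1 + 2 * x) / 24 + (x - 1) ^ 2 * x / 8 * t + -(x - 1) ^ 2 / 8 * t ^ 2 +
        -(x - 1) ^ 2 * (2 + x) / 24 * t ^ 3 := by
    filter_upwards [Iio_mem_nhds hτ] with t ht
    rw [GreenG, if_pos ht.le]
    ring
  rw [hcubic.deriv.deriv_eq, deriv_deriv_cubic]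
  ring

theorem greenG_deriv_deriv_eqOn_Ioi (x : ℝ) :
    EqOn (deriv (deriv fun t => GreenG x t))
      (fun τ => -(x + 1) ^ 2 / 4 + (x + 1) ^ 2 * (2 - x) / 4 * τ) (Ioi x) := by
  intro τ hτ
  have hcubic : (fun t => GreenG x t) =ᶠ[𝓝 τ] fun t =>
      (x + 1) ^ 2 * (1 - 2 * x) / 24 + (x + 1) ^ 2 * x / 8 * t + -(x + 1) ^ 2 / 8 * t ^ 2 +
        (x + 1) ^ 2 * (2 - x) / 24 * t ^ 3 := by
    filter_upwards [Ioi_mem_nhds hτ] with t ht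
    rw [GreenG, if_neg (not_le.mpr ht)]
    ring
  rw [hcubic.deriv.deriv_eq, deriv_deriv_cubic]
  ring

/-- reproducing property `∫_{-1}^1 G_{ττ}(x,τ) f''(τ) dτ = f(x)` for
`f ∈ H²([-1,1])` with clamped boundary conditions `f(±1) = 0`, `f'(±1) = 0`. -/
theorem stmt11 (f : ℝ → ℝ)
    (hf1 : ∀ x ∈ Set.Icc (-1 : ℝ) 1, HasDerivAt f (deriv f x) x)
    (hf2 : ∀ x ∈ Set.Icc (-1 : ℝ) 1, HasDerivAt (deriv f) (deriv (deriv f) x) x)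
    (hf2L2 : IntervalIntegrable (fun x => (deriv (deriv f) x) ^ 2) volume (-1) 1)
    (hb0 : f (-1) = 0) (hb1 : f 1 = 0)
    (hb0' : deriv f (-1) = 0) (hb1' : deriv f 1 = 0) :
    ∀ x ∈ Set.Icc (-1 : ℝ) 1,
      (∫ τ in (-1 : ℝ)..1, deriv (deriv (fun t => GreenG x t)) τ * deriv (deriv f) τ)
        = f x := by
  rintro x ⟨hx₁, hx₂⟩
  have hIcc : [[(-1 : ℝ), 1]] = Icc (-1) 1 := uIcc_of_le (by norm_num)
  rw [integral_mul_deriv_deriv_of_piecewise_affine hx₁ hx₂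
    ((greenG_deriv_deriv_eqOn_Iio x).mono Ioo_subset_Iio_self)
    ((greenG_deriv_deriv_eqOn_Ioi x).mono Ioo_subset_Ioi_self) (hIcc ▸ hf1) (hIcc ▸ hf2)
    (hf2L2.of_sq (measurable_deriv _).aestronglyMeasurable), hb0, hb1, hb0', hb1']
  ring
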